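/- arXiv:2008.05250 — 2 statements merged into one kernel-verified Lean document; each statement's English description precedes it below -/
import Mathlib

section
/- Let n ≥ 1, let a : Fin n → ℝ be nonnegative, let b : Fin (n+1) → ℝ be nonnegative, and let γ ∈ [0,1]. Define F(x) = γ·(Σ_{i=1}^n a_i·x_0·x_i) − (1−γ)·(Σ_{i=0}^n b_i·x_i) for x in the probability simplex in ℝ^{n+1}. If i* is an index maximizing b, then F(x) ≥ F(e_{i*}) = −(1−γ)·b_{i*} for all x in the simplex, where e_{i*} is the standard basis vector at i*. -/
theorem stmt_3 (n : ℕ) (hn : 1 ≤ n)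
    (a : Fin n → ℝ) (ha : ∀ i, 0 ≤ a i)
    (b : Fin (n + 1) → ℝ) (hb : ∀ i, 0 ≤ b i)
    (γ : ℝ) (hγ0 : 0 ≤ γ) (hγ1 : γ ≤ 1)
    (istar : Fin (n + 1)) (hstar : ∀ j, b j ≤ b istar)
    (x : Fin (n + 1) → ℝ) (hx : ∀ i, 0 ≤ x i) (hsum : ∑ i, x i = 1) :
    γ * (∑ i : Fin n, a i * x 0 * x i.succ) - (1 - γ) * (∑ i, b i * x i)
      ≥ -(1 - γ) * b istar ∧
    γ * (∑ i : Fin n, a i * (if (0 : Fin (n + 1)) = istar then (1:ℝ) else 0) *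
          (if i.succ = istar then (1:ℝ) else 0)) -
      (1 - γ) * (∑ i, b i * (if i = istar then (1:ℝ) else 0))
      = -(1 - γ) * b istar := by
  constructor
  · have h1 : 0 ≤ γ * (∑ i : Fin n, a i * x 0 * x i.succ) := by
      apply mul_nonneg hγ0
      apply Finset.sum_nonneg
      intro i _
      exact mul_nonneg (mul_nonneg (ha i) (hx 0)) (hx i.succ)
    have h2 : (∑ i, b i * x i) ≤ b istar := by
      calc (∑ i, b i * x i) ≤ ∑ i, b istar * x i := by
            apply Finset.sum_le_sum
            intro i _
            exact mul_le_mul_of_nonneg_right (hstar i) (hx i)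
        _ = b istar := by rw [← Finset.mul_sum, hsum, mul_one]
    have h3 : (1 - γ) * (∑ i, b i * x i) ≤ (1 - γ) * b istar :=
      mul_le_mul_of_nonneg_left h2 (by linarith)
    linarith
  · have hs : (∑ i : Fin n, a i * (if (0 : Fin (n + 1)) = istar then (1:ℝ) else 0) *
          (if i.succ = istar then (1:ℝ) else 0)) = 0 := by
      apply Finset.sum_eq_zero
      intro i _
      by_cases h : (0 : Fin (n + 1)) = istar
      · have : i.succ ≠ istar := by rw [← h]; exact Fin.succ_ne_zero i
        simp [this]
      · simp [h]
    rw [hs, Finset.sum_eq_single istar (by intro j _ hj; simp [hj]) (by simp)]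
    simp
    ring
end

section
/- Let B, R, A¹, A² : ℝ → ℝ be continuously differentiable functions satisfying on [0,T]: B' = −(f¹(A¹) + f²(A²))·R, R' = −p₀·r_R·B, (A¹)' = −p₁·r₁·B, (A²)' = −p₂·r₂·B, where fⁱ(a) = α_dⁱ + (α_cⁱ − α_dⁱ)·a/A₀ⁱ with A₀ⁱ = Aⁱ(0) > 0, R(0) = R₀. Let X(t) = ∫₀ᵗ B(s) ds. Then X satisfies the second-order ODE X''(t) = −C₁·X(t)² + C₂·X(t) − C₃ on [0,T], where C₁ = p₀p₁r_R r₁(α_c¹−α_d¹)/A₀¹ + p₀p₂r_R r₂(α_c²−α_d²)/A₀², C₂ = [p₁r₁(α_c¹−α_d¹)R₀ + p₀r_R α_c¹ A₀¹]/A₀¹ + [p₂r₂(α_c²−α_d²)R₀ + p₀r_R α_c² A₀²]/A₀², and C₃ = (α_c¹ + α_c²)·R₀. -/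
theorem stmt_6 (T p0 p1 p2 rR r1 r2 αd1 αc1 αd2 αc2 R0 A01 A02 : ℝ)
    (B R A1 A2 : ℝ → ℝ)
    (hp0 : 0 ≤ p0) (hp1 : 0 ≤ p1) (hp2 : 0 ≤ p2) (hsum : p0 + p1 + p2 = 1)
    (hrR : 0 < rR) (hr1 : 0 < r1) (hr2 : 0 < r2)
    (hα1 : αd1 ≤ αc1) (hα2 : αd2 ≤ αc2)
    (hA01 : A1 0 = A01) (hA01pos : 0 < A01)
    (hA02 : A2 0 = A02) (hA02pos : 0 < A02)
    (hR0 : R 0 = R0)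
    (hBcont : Continuous B)
    (hB : ∀ t ∈ Set.Icc (0 : ℝ) T, HasDerivAt B
      (-(((αd1 + (αc1 - αd1) * A1 t / A01) + (αd2 + (αc2 - αd2) * A2 t / A02)) * R t)) t)
    (hR : ∀ t ∈ Set.Icc (0 : ℝ) T, HasDerivAt R (-(p0 * rR * B t)) t)
    (hA1 : ∀ t ∈ Set.Icc (0 : ℝ) T, HasDerivAt A1 (-(p1 * r1 * B t)) t)
    (hA2 : ∀ t ∈ Set.Icc (0 : ℝ) T, HasDerivAt A2 (-(p2 * r2 * B t)) t) :
    ∀ t ∈ Set.Icc (0 : ℝ) T,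
      HasDerivAt (fun u => ∫ s in (0 : ℝ)..u, B s) (B t) t ∧
      HasDerivAt B
        (-(p0 * p1 * rR * r1 * (αc1 - αd1) / A01 +
            p0 * p2 * rR * r2 * (αc2 - αd2) / A02) *
            (∫ s in (0 : ℝ)..t, B s) ^ 2 +
          ((p1 * r1 * (αc1 - αd1) * R0 + p0 * rR * αc1 * A01) / A01 +
            (p2 * r2 * (αc2 - αd2) * R0 + p0 * rR * αc2 * A02) / A02) *
            (∫ s in (0 : ℝ)..t, B s) -
          (αc1 + αc2) * R0) t := by
  intro t ht
  obtain ⟨ht0, htT⟩ := ht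
  have hX : HasDerivAt (fun u => ∫ s in (0 : ℝ)..u, B s) (B t) t :=
    intervalIntegral.integral_hasDerivAt_right (hBcont.intervalIntegrable 0 t)
      (hBcont.aestronglyMeasurable.stronglyMeasurableAtFilter) hBcont.continuousAt
  refine ⟨hX, ?_⟩
  have hsub : Set.uIcc (0 : ℝ) t ⊆ Set.Icc 0 T := by
    rw [Set.uIcc_of_le ht0]
    exact Set.Icc_subset_Icc le_rfl htT
  set X : ℝ := ∫ s in (0 : ℝ)..t, B s with hXdef
  -- general fact: a function with derivative -(c * B) satisfies F t = F 0 - c * X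
  have key : ∀ (F : ℝ → ℝ) (c : ℝ),
      (∀ u ∈ Set.Icc (0 : ℝ) T, HasDerivAt F (-(c * B u)) u) → F t = F 0 - c * X := by
    intro F c hF
    have h1 : (∫ u in (0 : ℝ)..t, -(c * B u)) = F t - F 0 :=
      intervalIntegral.integral_eq_sub_of_hasDerivAt (fun u hu => hF u (hsub hu))
        (((continuous_const.mul hBcont).neg).intervalIntegrable 0 t)
    have h2 : (∫ u in (0 : ℝ)..t, -(c * B u)) = -(c * X) := by
      rw [intervalIntegral.integral_neg, intervalIntegral.integral_const_mul]
    rw [h2] at h1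
    linarith
  have hRt : R t = R0 - p0 * rR * X := by rw [← hR0]; exact key R _ hR
  have hA1t : A1 t = A01 - p1 * r1 * X := by rw [← hA01]; exact key A1 _ hA1
  have hA2t : A2 t = A02 - p2 * r2 * X := by rw [← hA02]; exact key A2 _ hA2
  have := hB t ⟨ht0, htT⟩
  convert this using 1
  rw [hRt, hA1t, hA2t]
  field_simp
  ring
end
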